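/- arXiv:2002.03967 — 4 statements merged into one kernel-verified Lean document; each statement's English description precedes it below -/
import Mathlib

section
/- Let n ∈ ℕ, μ, ν ∈ ℝⁿ histograms, and F : ℝ^{n×n} → ℝ a convex differentiable function. If π* minimizes F over Π(μ,ν), then the cost matrix c* = ∇F(π*) attains the supremum in the adversarial problem: OT_{c*}(μ,ν) − F*(c*) = min_{π∈Π(μ,ν)} F(π) = sup_{c ∈ ℝ^{n×n}} [ OT_c(μ,ν) − F*(c) ]. -/
open scoped BigOperators

/-- `μ` is a histogram: nonnegative entries summing to `1`. -/
def IsHistogram {n : ℕ} (μ : Fin n → ℝ) : Prop := (∀ i, 0 ≤ μ i) ∧ ∑ i, μ i = 1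

/-- The transportation polytope `Π(μ,ν)`: matrices with nonnegative entries,
row sums `μ` and column sums `ν`. -/
def DCouplings {n : ℕ} (μ ν : Fin n → ℝ) : Set (Fin n → Fin n → ℝ) :=
  {π | (∀ i j, 0 ≤ π i j) ∧ (∀ i, ∑ j, π i j = μ i) ∧ (∀ j, ∑ i, π i j = ν j)}

/-- Frobenius inner product `⟨c, π⟩`. -/
def frob {n : ℕ} (c π : Fin n → Fin n → ℝ) : ℝ := ∑ i, ∑ j, c i j * π i j

/-- Discrete optimal transport cost `OT_c(μ,ν)`. -/
noncomputable def dOT {n : ℕ} (c : Fin n → Fin n → ℝ) (μ ν : Fin n → ℝ) : ℝ :=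
  ⨅ π : DCouplings μ ν, frob c π.1

/-- Convex conjugate of `G : ℝ^{n×n} → ℝ ∪ {+∞}`. -/
noncomputable def dconj {n : ℕ} (G : (Fin n → Fin n → ℝ) → EReal)
    (c : Fin n → Fin n → ℝ) : EReal :=
  ⨆ π : Fin n → Fin n → ℝ, ((frob c π : ℝ) : EReal) - G π

/-!
Since `c* = ∇F(π*)`, the subgradient inequality of the convex function `F` at `π*` says that `π*`
maximises `⟨c*, π⟩ - F π`, so `F*(c*) = ⟨c*, π*⟩ - F(π*)`; and the first-order optimality
condition for `π*` on the convex set `Π(μ,ν)` says that `π*` is an optimal coupling for the linear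
cost `c*`, so `OT_{c*}(μ,ν) = ⟨c*, π*⟩`. Hence the adversarial objective at `c*` equals `F(π*)`.
Conversely, for every cost `c` we have `OT_c(μ,ν) ≤ ⟨c, π*⟩` and `F*(c) ≥ ⟨c, π*⟩ - F(π*)`,
so no cost does better than `F(π*)`.
-/

section ConvexCalculus

variable {E : Type*} [NormedAddCommGroup E] [NormedSpace ℝ E] {s : Set E} {f : E → ℝ}
  {f' : E →L[ℝ] ℝ} {x y : E}

theorem ConvexOn.le_of_hasFDerivAt (hf : ConvexOn ℝ s f) (hx : x ∈ s) (hy : y ∈ s)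
    (hf' : HasFDerivAt f f' x) : f x + f' (y - x) ≤ f y := by
  let g : ℝ →ᵃ[ℝ] E := AffineMap.lineMap x y
  have hderiv : HasDerivAt (f ∘ g) (f' (y - x)) 0 :=
    hf'.comp_hasDerivAt_of_eq 0 AffineMap.hasDerivAt_lineMap
      (AffineMap.lineMap_apply_zero x y).symm
  have := (hf.comp_affineMap g).le_slope_of_hasDerivAt (x := 0) (y := 1) (by simpa [g])
    (by simpa [g]) one_pos hderiv
  simp only [slope_def_field, Function.comp_apply, g, AffineMap.lineMap_apply_one,
    AffineMap.lineMap_apply_zero, sub_zero, div_one] at this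
  linarith

theorem IsMinOn.hasFDerivAt_nonneg (h : IsMinOn f s x) (hs : Convex ℝ s) (hx : x ∈ s)
    (hy : y ∈ s) (hf' : HasFDerivAt f f' x) : 0 ≤ f' (y - x) :=
  h.localize.hasFDerivWithinAt_nonneg hf'.hasFDerivWithinAt
    (sub_mem_posTangentConeAt_of_segment_subset (hs.segment_subset hx hy))

end ConvexCalculus

section DiscreteOT

variable {n : ℕ} {μ ν : Fin n → ℝ} {c π : Fin n → Fin n → ℝ}

theorem frob_eq_apply (L : (Fin n → Fin n → ℝ) →ₗ[ℝ] ℝ)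
    (hc : c = fun i j => L (Pi.single i (Pi.single j 1))) (π : Fin n → Fin n → ℝ) :
    frob c π = L π := by
  have hπ : π = ∑ i, ∑ j, π i j • (Pi.single i (Pi.single j 1) : Fin n → Fin n → ℝ) := by
    ext i j
    simp [Finset.sum_apply, Pi.single_apply, ite_apply]
  conv_rhs => rw [hπ]
  simp only [map_sum, map_smul, smul_eq_mul, frob, hc, mul_comm]

theorem convex_dCouplings : Convex ℝ (DCouplings μ ν) := by
  rintro π ⟨hπ0, hπμ, hπν⟩ ρ ⟨hρ0, hρμ, hρν⟩ a b ha hb hab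
  refine ⟨fun i j => ?_, fun i => ?_, fun j => ?_⟩
  · simp only [Pi.add_apply, Pi.smul_apply, smul_eq_mul]
    have := hπ0 i j; have := hρ0 i j; positivity
  · simp only [Pi.add_apply, Pi.smul_apply, smul_eq_mul, Finset.sum_add_distrib,
      ← Finset.mul_sum, hπμ, hρμ, ← add_mul, hab, one_mul]
  · simp only [Pi.add_apply, Pi.smul_apply, smul_eq_mul, Finset.sum_add_distrib,
      ← Finset.mul_sum, hπν, hρν, ← add_mul, hab, one_mul]

theorem apply_le_of_mem_dCouplings (hπ : π ∈ DCouplings μ ν) (i j : Fin n) : π i j ≤ μ i :=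
  hπ.2.1 i ▸ Finset.single_le_sum (fun j _ => hπ.1 i j) (Finset.mem_univ j)

theorem neg_sum_abs_mul_le_frob (hπ : π ∈ DCouplings μ ν) :
    -∑ i, ∑ j, |c i j| * μ i ≤ frob c π := by
  simp only [frob, ← Finset.sum_neg_distrib]
  refine Finset.sum_le_sum fun i _ => Finset.sum_le_sum fun j _ => ?_
  have := hπ.1 i j
  have := apply_le_of_mem_dCouplings hπ i j
  nlinarith [neg_abs_le (c i j), abs_nonneg (c i j)]

theorem dOT_le_frob (hπ : π ∈ DCouplings μ ν) : dOT c μ ν ≤ frob c π :=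
  ciInf_le ⟨_, by rintro _ ⟨ρ, rfl⟩; exact neg_sum_abs_mul_le_frob ρ.2⟩ (⟨π, hπ⟩ : DCouplings μ ν)

theorem dOT_eq_frob_of_isMinOn (hπ : π ∈ DCouplings μ ν)
    (hmin : IsMinOn (frob c) (DCouplings μ ν) π) : dOT c μ ν = frob c π :=
  have : Nonempty (DCouplings μ ν) := ⟨⟨π, hπ⟩⟩
  (dOT_le_frob hπ).antisymm (le_ciInf fun ρ => hmin ρ.2)

theorem frob_sub_le_dconj (G : (Fin n → Fin n → ℝ) → EReal) (c π : Fin n → Fin n → ℝ) :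
    ((frob c π : ℝ) : EReal) - G π ≤ dconj G c :=
  le_iSup (fun π => ((frob c π : ℝ) : EReal) - G π) π

theorem dconj_eq_of_forall_le {F : (Fin n → Fin n → ℝ) → ℝ}
    (h : ∀ ρ, frob c ρ - F ρ ≤ frob c π - F π) :
    dconj (fun ρ => ((F ρ : ℝ) : EReal)) c = ((frob c π - F π : ℝ) : EReal) :=
  (iSup_le fun ρ => by rw [← EReal.coe_sub]; exact_mod_cast h ρ).antisymm <| by
    rw [EReal.coe_sub]; exact frob_sub_le_dconj (fun ρ => ((F ρ : ℝ) : EReal)) c π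

theorem dOT_sub_dconj_le (F : (Fin n → Fin n → ℝ) → ℝ) (hπ : π ∈ DCouplings μ ν)
    (c : Fin n → Fin n → ℝ) :
    ((dOT c μ ν : ℝ) : EReal) - dconj (fun ρ => ((F ρ : ℝ) : EReal)) c ≤ ((F π : ℝ) : EReal) :=
  calc ((dOT c μ ν : ℝ) : EReal) - dconj (fun ρ => ((F ρ : ℝ) : EReal)) c
      ≤ ((dOT c μ ν : ℝ) : EReal) - (((frob c π : ℝ) : EReal) - ((F π : ℝ) : EReal)) :=
        EReal.sub_le_sub le_rfl (frob_sub_le_dconj (fun ρ => ((F ρ : ℝ) : EReal)) c π)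
    _ ≤ ((F π : ℝ) : EReal) := by
        norm_cast
        linarith [dOT_le_frob (c := c) hπ]

end DiscreteOT

theorem stmt4_general {n : ℕ} (μ ν : Fin n → ℝ)
    (F : (Fin n → Fin n → ℝ) → ℝ)
    (hconv : ConvexOn ℝ Set.univ F)
    (hdiff : Differentiable ℝ F)
    (πstar : Fin n → Fin n → ℝ) (hπ : πstar ∈ DCouplings μ ν)
    (hmin : ∀ π ∈ DCouplings μ ν, F πstar ≤ F π)
    (cstar : Fin n → Fin n → ℝ)
    (hc : cstar = fun i j => fderiv ℝ F πstar (Pi.single i (Pi.single j 1))) :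
    ((dOT cstar μ ν : ℝ) : EReal) - dconj (fun π => ((F π : ℝ) : EReal)) cstar
        = ((F πstar : ℝ) : EReal) ∧
    ((F πstar : ℝ) : EReal) =
      ⨆ c : Fin n → Fin n → ℝ,
        ((dOT c μ ν : ℝ) : EReal) - dconj (fun π => ((F π : ℝ) : EReal)) c := by
  have hgrad : ∀ π, frob cstar π = fderiv ℝ F πstar π :=
    frob_eq_apply (fderiv ℝ F πstar).toLinearMap hc
  have hfirstOrder : IsMinOn (frob cstar) (DCouplings μ ν) πstar :=
    isMinOn_iff.mpr fun ρ hρ => by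
      have := (isMinOn_iff.mpr hmin).hasFDerivAt_nonneg convex_dCouplings hπ hρ
        (hdiff πstar).hasFDerivAt
      rw [map_sub, ← hgrad, ← hgrad] at this
      linarith
  have hsubgrad : ∀ π, frob cstar π - F π ≤ frob cstar πstar - F πstar := fun π => by
    have := hconv.le_of_hasFDerivAt (Set.mem_univ πstar) (Set.mem_univ π)
      (hdiff πstar).hasFDerivAt
    rw [map_sub, ← hgrad, ← hgrad] at this
    linarith
  have hattained : ((dOT cstar μ ν : ℝ) : EReal) - dconj (fun π => ((F π : ℝ) : EReal)) cstar
      = ((F πstar : ℝ) : EReal) := by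
    rw [dOT_eq_frob_of_isMinOn hπ hfirstOrder, dconj_eq_of_forall_le hsubgrad, ← EReal.coe_sub]
    norm_num
  exact ⟨hattained,
    (le_iSup_of_le cstar hattained.ge).antisymm (iSup_le (dOT_sub_dconj_le F hπ))⟩

/-- If `F : ℝ^{n×n} → ℝ` is convex and differentiable and `π*` minimizes `F`
over `Π(μ,ν)`, then `c* = ∇F(π*)` attains the supremum in the adversarial problem:
`OT_{c*}(μ,ν) − F*(c*) = min_{π∈Π(μ,ν)} F(π) = sup_c OT_c(μ,ν) − F*(c)`. -/
theorem stmt4 {n : ℕ} (μ ν : Fin n → ℝ) (hμ : IsHistogram μ) (hν : IsHistogram ν)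
    (F : (Fin n → Fin n → ℝ) → ℝ)
    (hconv : ConvexOn ℝ Set.univ F)
    (hdiff : Differentiable ℝ F)
    (πstar : Fin n → Fin n → ℝ) (hπ : πstar ∈ DCouplings μ ν)
    (hmin : ∀ π ∈ DCouplings μ ν, F πstar ≤ F π)
    (cstar : Fin n → Fin n → ℝ)
    (hc : cstar = fun i j => fderiv ℝ F πstar (Pi.single i (Pi.single j 1))) :
    ((dOT cstar μ ν : ℝ) : EReal) - dconj (fun π => ((F π : ℝ) : EReal)) cstar
        = ((F πstar : ℝ) : EReal) ∧
    ((F πstar : ℝ) : EReal) =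
      ⨆ c : Fin n → Fin n → ℝ,
        ((dOT c μ ν : ℝ) : EReal) - dconj (fun π => ((F π : ℝ) : EReal)) c :=
  stmt4_general μ ν F hconv hdiff πstar hπ hmin cstar hc
end

section
/- With the hypotheses of the nonnegative-adversarial-cost proposition, if in addition each R_{ij} : ℝ → ℝ is continuously differentiable, then the linearized regularizer R̂_{ij} (equal to R_{ij}(x) for x ≥ t_{ij} = (R_{ij}*)'(−(c₀)_{ij}/ε) and to the affine function x ↦ (−(c₀)_{ij}/ε)·x − R_{ij}*(−(c₀)_{ij}/ε) for x < t_{ij}) is continuously differentiable on ℝ. -/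
open scoped BigOperators

/-- Convex conjugate `f*` of a scalar function `f : ℝ → ℝ`. -/
noncomputable def rconj (f : ℝ → ℝ) (y : ℝ) : EReal :=
  ⨆ x : ℝ, ((x * y - f x : ℝ) : EReal)

/-- Short-range linearization `R̂` of a scalar regularizer `f`:
equal to `f` above the threshold `t` and affine (slope `y₀`) below it. -/
noncomputable def rhat (f : ℝ → ℝ) (y₀ t : ℝ) (x : ℝ) : ℝ :=
  if t ≤ x then f x else y₀ * x - (rconj f y₀).toReal

/-!
If `f*` is differentiable at `y₀` with derivative `t₀`, then `t₀` attains the supremum defining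
`f*(y₀)`: along the segment from `y₀` to `f'(t₀)` the conjugate lies below its chord, and at the
far end `f*(f'(t₀)) ≤ t₀ f'(t₀) - f(t₀)` because the tangent line at `t₀` lies below `f`;
comparing slopes at `y₀` turns the Fenchel–Young inequality `f(t₀) + f*(y₀) ≥ t₀ y₀` into an
equality. Hence `t₀` minimizes `x ↦ f x - y₀ x`, so `f'(t₀) = y₀`, and the affine piece of `R̂`
meets `f` at `t₀` with the same value and slope.
-/

open Set Filter Topology

theorem HasDerivAt.mul_le_of_eventually_le {g : ℝ → ℝ} {g' x v C : ℝ} (hg : HasDerivAt g g' x)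
    (h : ∀ᶠ l in 𝓝[>] 0, g (x + l * v) ≤ g x + l * C) : g' * v ≤ C := by
  have hline : HasDerivAt (fun l : ℝ => x + l * v) v 0 := by
    simpa using ((hasDerivAt_id (0 : ℝ)).mul_const v).const_add x
  have hcomp : HasDerivAt (fun l => g (x + l * v)) (g' * v) 0 :=
    (by simpa using hg : HasDerivAt g g' (x + 0 * v)).comp 0 hline
  refine le_of_tendsto (by simpa using hcomp.tendsto_slope_zero_right) ?_
  filter_upwards [h, self_mem_nhdsWithin] with l hl (hl0 : 0 < l)
  rw [inv_mul_le_iff₀ hl0]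
  linarith

theorem ConvexOn.add_mul_sub_le_of_hasDerivAt {f : ℝ → ℝ} {d a : ℝ}
    (hconv : ConvexOn ℝ univ f) (hd : HasDerivAt f d a) (x : ℝ) : f a + d * (x - a) ≤ f x := by
  rcases lt_trichotomy x a with h | rfl | h
  · have hs := hconv.slope_le_of_hasDerivAt (mem_univ x) (mem_univ a) h hd
    rw [slope_def_field, div_le_iff₀ (sub_pos.mpr h)] at hs
    linarith
  · simp
  · have hs := hconv.le_slope_of_hasDerivAt (mem_univ a) (mem_univ x) h hd
    rw [slope_def_field, le_div_iff₀ (sub_pos.mpr h)] at hs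
    linarith

theorem le_rconj (f : ℝ → ℝ) (x y : ℝ) : ((x * y - f x : ℝ) : EReal) ≤ rconj f y :=
  le_iSup (fun x : ℝ => ((x * y - f x : ℝ) : EReal)) x

theorem rconj_ne_bot (f : ℝ → ℝ) (y : ℝ) : rconj f y ≠ ⊥ :=
  ne_bot_of_le_ne_bot (EReal.coe_ne_bot _) (le_rconj f 0 y)

theorem rconj_le_coe_iff {f : ℝ → ℝ} {y M : ℝ} : rconj f y ≤ M ↔ ∀ x, x * y - f x ≤ M := by
  simp only [rconj, iSup_le_iff, EReal.coe_le_coe_iff]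

theorem coe_toReal_rconj {f : ℝ → ℝ} {y : ℝ} (hfin : rconj f y ≠ ⊤) :
    ((rconj f y).toReal : EReal) = rconj f y :=
  EReal.coe_toReal hfin (rconj_ne_bot f y)

theorem toReal_rconj_le {f : ℝ → ℝ} {y M : ℝ} (h : rconj f y ≤ M) : (rconj f y).toReal ≤ M := by
  simpa using EReal.toReal_le_toReal h (rconj_ne_bot f y) (EReal.coe_ne_top M)

theorem mul_sub_le_toReal_rconj {f : ℝ → ℝ} {y : ℝ} (hfin : rconj f y ≠ ⊤) (x : ℝ) :
    x * y - f x ≤ (rconj f y).toReal :=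
  rconj_le_coe_iff.mp (coe_toReal_rconj hfin).ge x

theorem rconj_le_of_hasDerivAt {f : ℝ → ℝ} {d a : ℝ} (hconv : ConvexOn ℝ univ f)
    (hd : HasDerivAt f d a) : rconj f d ≤ ((a * d - f a : ℝ) : EReal) :=
  rconj_le_coe_iff.mpr fun x => by linarith [hconv.add_mul_sub_le_of_hasDerivAt hd x]

theorem rconj_add_mul_sub_le {f : ℝ → ℝ} {y z A B l : ℝ} (hy : rconj f y ≤ A)
    (hz : rconj f z ≤ B) (hl₀ : 0 ≤ l) (hl₁ : l ≤ 1) :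
    rconj f (y + l * (z - y)) ≤ ((A + l * (B - A) : ℝ) : EReal) := by
  refine rconj_le_coe_iff.mpr fun x => ?_
  have hA := rconj_le_coe_iff.mp hy x
  have hB := rconj_le_coe_iff.mp hz x
  nlinarith [mul_le_mul_of_nonneg_left hB hl₀, mul_le_mul_of_nonneg_left hA (sub_nonneg.mpr hl₁)]

theorem add_toReal_rconj_eq_of_hasDerivAt {f : ℝ → ℝ} {d y₀ t₀ : ℝ}
    (hconv : ConvexOn ℝ univ f) (hd : HasDerivAt f d t₀) (hfin : rconj f y₀ ≠ ⊤)
    (ht : HasDerivAt (fun y => (rconj f y).toReal) t₀ y₀) :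
    f t₀ + (rconj f y₀).toReal = t₀ * y₀ := by
  set r := (rconj f y₀).toReal
  have hchord : ∀ l ∈ Icc (0 : ℝ) 1,
      (rconj f (y₀ + l * (d - y₀))).toReal ≤ r + l * ((t₀ * d - f t₀) - r) := fun l hl =>
    toReal_rconj_le <|
      rconj_add_mul_sub_le (coe_toReal_rconj hfin).ge (rconj_le_of_hasDerivAt hconv hd) hl.1 hl.2
  have hslope : t₀ * (d - y₀) ≤ t₀ * d - f t₀ - r := by
    refine ht.mul_le_of_eventually_le ?_
    filter_upwards [Ioc_mem_nhdsGT zero_lt_one] with l hl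
    exact hchord l (Ioc_subset_Icc_self hl)
  linarith [mul_sub_le_toReal_rconj hfin t₀]

theorem eq_of_hasDerivAt_of_add_toReal_rconj_eq {f : ℝ → ℝ} {d y₀ t₀ : ℝ}
    (hd : HasDerivAt f d t₀) (hfin : rconj f y₀ ≠ ⊤)
    (heq : f t₀ + (rconj f y₀).toReal = t₀ * y₀) : d = y₀ := by
  have hmin : IsLocalMin (fun x => f x - y₀ * x) t₀ :=
    Eventually.of_forall fun x => by linarith [mul_sub_le_toReal_rconj hfin x]
  have := hmin.hasDerivAt_eq_zero (hd.sub ((hasDerivAt_id t₀).const_mul y₀))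
  simp only [mul_one] at this
  linarith

theorem contDiff_one_ite_le {f g : ℝ → ℝ} {t : ℝ} (hf : ContDiff ℝ 1 f) (hg : ContDiff ℝ 1 g)
    (hval : f t = g t) (hderiv : deriv f t = deriv g t) :
    ContDiff ℝ 1 (fun x => if t ≤ x then f x else g x) := by
  set h := fun x => if t ≤ x then f x else g x
  set D := fun x => if t ≤ x then deriv f x else deriv g x
  have hf' := fun x => (hf.differentiable one_ne_zero x).hasDerivAt
  have hg' := fun x => (hg.differentiable one_ne_zero x).hasDerivAt
  have hD : ∀ x, HasDerivAt h (D x) x := by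
    intro x
    rcases lt_trichotomy x t with hx | rfl | hx
    · have hgx : h =ᶠ[𝓝 x] g := by
        filter_upwards [Iio_mem_nhds hx] with y hy
        exact if_neg (not_le.mpr hy)
      simpa [D, not_le.mpr hx] using (hg' x).congr_of_eventuallyEq hgx
    · have hleft : HasDerivWithinAt h (deriv f x) (Iic x) x := by
        refine (hderiv ▸ hg' x).hasDerivWithinAt.congr (fun y hy => ?_)
          ((if_pos le_rfl).trans hval)
        rcases (mem_Iic.mp hy).lt_or_eq with hy | rfl
        · exact if_neg (not_le.mpr hy)
        · exact (if_pos le_rfl).trans hval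
      have hright : HasDerivWithinAt h (deriv f x) (Ici x) x :=
        (hf' x).hasDerivWithinAt.congr (fun y hy => if_pos hy) (if_pos le_rfl)
      simpa [D, Iic_union_Ici] using hleft.union hright
    · have hfx : h =ᶠ[𝓝 x] f := by
        filter_upwards [Ioi_mem_nhds hx] with y hy
        exact if_pos (le_of_lt hy)
      simpa [D, hx.le] using (hf' x).congr_of_eventuallyEq hfx
  have hDcont : Continuous D :=
    hf.continuous_deriv_one.if_le hg.continuous_deriv_one continuous_const continuous_id
      fun x hx => hx ▸ hderiv
  refine contDiff_one_iff_deriv.mpr ⟨fun x => (hD x).differentiableAt, ?_⟩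
  rwa [funext fun x => (hD x).deriv]

theorem contDiff_rhat {f : ℝ → ℝ} {y₀ t₀ : ℝ} (hconv : ConvexOn ℝ univ f)
    (hC1 : ContDiff ℝ 1 f) (hfin : rconj f y₀ ≠ ⊤)
    (ht : HasDerivAt (fun y => (rconj f y).toReal) t₀ y₀) :
    ContDiff ℝ 1 (rhat f y₀ t₀) := by
  have hd := (hC1.differentiable one_ne_zero t₀).hasDerivAt
  have hval := add_toReal_rconj_eq_of_hasDerivAt hconv hd hfin ht
  have hderiv := eq_of_hasDerivAt_of_add_toReal_rconj_eq hd hfin hval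
  refine contDiff_one_ite_le hC1 ((contDiff_const.mul contDiff_id).sub contDiff_const)
    (by linarith) ?_
  simp [hderiv]

theorem stmt6_general {n : ℕ} (c₀ : Fin n → Fin n → ℝ) (ε : ℝ)
    (R : Fin n → Fin n → ℝ → ℝ)
    (hconv : ∀ i j, ConvexOn ℝ Set.univ (R i j))
    (hC1 : ∀ i j, ContDiff ℝ 1 (R i j))
    (t : Fin n → Fin n → ℝ)
    (hfin : ∀ i j, rconj (R i j) (-(c₀ i j) / ε) ≠ ⊤)
    (ht : ∀ i j, HasDerivAt (fun y => (rconj (R i j) y).toReal) (t i j) (-(c₀ i j) / ε)) :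
    ∀ i j, ContDiff ℝ 1 (rhat (R i j) (-(c₀ i j) / ε) (t i j)) :=
  fun i j => contDiff_rhat (hconv i j) (hC1 i j) (hfin i j) (ht i j)

/-- If moreover each `R_{ij}` is continuously differentiable, then the
linearized regularizer `R̂_{ij}` is continuously differentiable on `ℝ`. -/
theorem stmt6 {n : ℕ} (c₀ : Fin n → Fin n → ℝ) (ε : ℝ) (hε : 0 < ε)
    (R : Fin n → Fin n → ℝ → ℝ)
    (hconv : ∀ i j, ConvexOn ℝ Set.univ (R i j))
    (hC1 : ∀ i j, ContDiff ℝ 1 (R i j))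
    (t : Fin n → Fin n → ℝ)
    (hfin : ∀ i j, rconj (R i j) (-(c₀ i j) / ε) ≠ ⊤)
    (ht : ∀ i j, HasDerivAt (fun y => (rconj (R i j) y).toReal) (t i j) (-(c₀ i j) / ε)) :
    ∀ i j, ContDiff ℝ 1 (rhat (R i j) (-(c₀ i j) / ε) (t i j)) :=
  stmt6_general c₀ ε R hconv hC1 t hfin ht
end

section
/- (Entropy-regularized OT is separably *-increasing.) Let X be a compact metric space, μ, ν Borel probability measures on X, c₀ ∈ C(X×X,ℝ), ε > 0. Define F on finite nonnegative Borel measures π on X×X by F(π) = ∫ c₀ dπ + ε ( ∫ log(dπ/d(μ⊗ν)) dπ − π(X×X) + 1 ) if π ≪ μ⊗ν, and F(π) = +∞ otherwise. Then for every c ∈ C(X×X,ℝ), F*(c) = ε ∫ ( exp((c − c₀)/ε) − 1 ) d(μ⊗ν); consequently, for all φ, ψ ∈ C(X,ℝ) and c ∈ C(X×X,ℝ) with φ(x)+ψ(y) ≤ c(x,y) for all x,y, one has F*(φ⊕ψ) ≤ F*(c), where (φ⊕ψ)(x,y) = φ(x)+ψ(y). -/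
/-!
With `t = dπ/dρ` and `a = (c - c₀)/ε`, the Fenchel–Young inequality `t a - t log t + t ≤ exp a`
integrated against `ρ` bounds every term `∫ c dπ - F(π)` of the supremum by
`ε ∫ (exp a - 1) dρ`, with equality at the Gibbs measure `dπ = exp a dρ`. Monotonicity of `F*`
in the cost only uses that the measures `π` are nonnegative.
-/

open MeasureTheory Classical

/-- The entropy-regularized OT objective
`F(π) = ∫ c₀ dπ + ε (∫ log(dπ/dρ) dπ − π(X×X) + 1)` for `π ≪ ρ`, `+∞` otherwise. -/
noncomputable def entF {X : Type*} [MeasurableSpace X] [TopologicalSpace X]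
    (c₀ : C(X × X, ℝ)) (ε : ℝ) (ρ : Measure (X × X)) (π : Measure (X × X)) : EReal :=
  if π ≪ ρ ∧ Integrable (llr π ρ) π then
    (((∫ p, c₀ p ∂π) + ε * ((∫ p, llr π ρ p ∂π) - (π Set.univ).toReal + 1) : ℝ) : EReal)
  else ⊤

/-- Convex conjugate of `entF`, the supremum being taken over finite nonnegative Borel
measures on `X × X`. -/
noncomputable def entFstar {X : Type*} [MeasurableSpace X] [TopologicalSpace X]
    (c₀ : C(X × X, ℝ)) (ε : ℝ) (ρ : Measure (X × X)) (c : C(X × X, ℝ)) : EReal :=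
  ⨆ π : {π : Measure (X × X) // IsFiniteMeasure π},
    ((∫ p, c p ∂π.1 : ℝ) : EReal) - entF c₀ ε ρ π.1

/-- The separable cost `φ ⊕ ψ : (x,y) ↦ φ(x) + ψ(y)`. -/
def oplus {X : Type*} [TopologicalSpace X] (φ ψ : C(X, ℝ)) : C(X × X, ℝ) :=
  ⟨fun p => φ p.1 + ψ p.2, (φ.continuous.comp continuous_fst).add
    (ψ.continuous.comp continuous_snd)⟩

lemma Continuous.integrable_of_compactSpace {Y : Type*} [TopologicalSpace Y] [CompactSpace Y]
    [MeasurableSpace Y] [OpensMeasurableSpace Y] {f : Y → ℝ} (hf : Continuous f)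
    (ρ : Measure Y) [IsFiniteMeasure ρ] : Integrable f ρ :=
  (BoundedContinuousFunction.mkOfCompact ⟨f, hf⟩).integrable ρ

lemma mul_sub_mul_log_add_le_exp {t : ℝ} (ht : 0 ≤ t) (a : ℝ) :
    t * a - t * Real.log t + t ≤ Real.exp a := by
  rcases ht.eq_or_lt with rfl | ht
  · simpa using (Real.exp_pos a).le
  · have h := mul_le_mul_of_nonneg_left (Real.add_one_le_exp (a - Real.log t)) ht.le
    rw [Real.exp_sub, Real.exp_log ht, mul_div_cancel₀ _ ht.ne'] at h
    linarith

section Gibbs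

variable {α : Type*} [MeasurableSpace α] {ρ π : Measure α} {f : α → ℝ}

lemma integral_sub_integral_llr_add_le_integral_exp [SigmaFinite ρ] [IsFiniteMeasure π]
    (hπρ : π ≪ ρ) (hllr : Integrable (llr π ρ) π) (hf : Integrable f π)
    (hexp : Integrable (fun x => Real.exp (f x)) ρ) :
    ∫ x, f x ∂π - ∫ x, llr π ρ x ∂π + (π Set.univ).toReal ≤ ∫ x, Real.exp (f x) ∂ρ := by
  set t : α → ℝ := fun x => (π.rnDeriv ρ x).toReal
  have htf : Integrable (fun x => t x * f x) ρ := (integrable_rnDeriv_smul_iff hπρ).2 hf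
  have htl : Integrable (fun x => t x * Real.log (t x)) ρ :=
    (integrable_rnDeriv_mul_log_iff hπρ).2 hllr
  have ht : Integrable t ρ := Measure.integrable_toReal_rnDeriv
  have htftl : Integrable (fun x => t x * f x - t x * Real.log (t x)) ρ := htf.sub htl
  calc ∫ x, f x ∂π - ∫ x, llr π ρ x ∂π + (π Set.univ).toReal
      = ∫ x, t x * f x ∂ρ - ∫ x, t x * Real.log (t x) ∂ρ + ∫ x, t x ∂ρ := by
        rw [integral_rnDeriv_mul_log hπρ, Measure.integral_toReal_rnDeriv hπρ]
        simp_rw [t, ← smul_eq_mul, integral_rnDeriv_smul hπρ]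
        rfl
    _ = ∫ x, (t x * f x - t x * Real.log (t x) + t x) ∂ρ := by
        rw [integral_add htftl ht, integral_sub htf htl]
    _ ≤ ∫ x, Real.exp (f x) ∂ρ :=
        integral_mono (htftl.add ht) hexp
          fun x => mul_sub_mul_log_add_le_exp ENNReal.toReal_nonneg (f x)

lemma llr_withDensity_exp_ae_eq [SigmaFinite ρ] (hf : Measurable f) :
    llr (ρ.withDensity fun x => ENNReal.ofReal (Real.exp (f x))) ρ =ᵐ[ρ] f := by
  filter_upwards [Measure.rnDeriv_withDensity ρ (hf.exp.ennreal_ofReal)] with x hx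
  rw [llr, hx, ENNReal.toReal_ofReal (Real.exp_pos _).le, Real.log_exp]

lemma toReal_withDensity_exp_univ (hexp : Integrable (fun x => Real.exp (f x)) ρ) :
    ((ρ.withDensity fun x => ENNReal.ofReal (Real.exp (f x))) Set.univ).toReal =
      ∫ x, Real.exp (f x) ∂ρ := by
  rw [withDensity_apply _ MeasurableSet.univ, Measure.restrict_univ,
    integral_eq_lintegral_of_nonneg_ae (.of_forall fun x => (Real.exp_pos _).le)
      hexp.aestronglyMeasurable]

lemma integral_exp_sub_one [IsProbabilityMeasure ρ]
    (hexp : Integrable (fun x => Real.exp (f x)) ρ) :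
    ∫ x, (Real.exp (f x) - 1) ∂ρ = ∫ x, Real.exp (f x) ∂ρ - 1 := by
  rw [integral_sub hexp (integrable_const 1), integral_const, probReal_univ, one_smul]

end Gibbs

section EntropicConjugate

variable {X : Type*} [TopologicalSpace X] [CompactSpace X] [MeasurableSpace X]
  [OpensMeasurableSpace (X × X)] (c₀ : C(X × X, ℝ)) {ε : ℝ} (ρ : Measure (X × X))

lemma entFstar_mono {c c' : C(X × X, ℝ)} (h : ∀ p, c p ≤ c' p) :
    entFstar c₀ ε ρ c ≤ entFstar c₀ ε ρ c' :=
  iSup_mono fun ⟨π, _⟩ => EReal.sub_le_sub (EReal.coe_le_coe_iff.2 <|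
    integral_mono (c.continuous.integrable_of_compactSpace π)
      (c'.continuous.integrable_of_compactSpace π) h) le_rfl

lemma integral_sub_entF_of_ac (hε : ε ≠ 0) (c : C(X × X, ℝ)) {π : Measure (X × X)}
    [IsFiniteMeasure π] (h : π ≪ ρ ∧ Integrable (llr π ρ) π) :
    ((∫ p, c p ∂π : ℝ) : EReal) - entF c₀ ε ρ π =
      ((ε * (∫ p, (c p - c₀ p) / ε ∂π - ∫ p, llr π ρ p ∂π + (π Set.univ).toReal - 1) : ℝ) :
        EReal) := by
  rw [entF, if_pos h, ← EReal.coe_sub, integral_div, integral_sub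
    (c.continuous.integrable_of_compactSpace π) (c₀.continuous.integrable_of_compactSpace π)]
  congr 1
  field_simp
  ring

variable [IsProbabilityMeasure ρ]

lemma integral_sub_entF_le (hε : 0 < ε) (c : C(X × X, ℝ)) (π : Measure (X × X))
    [IsFiniteMeasure π] :
    ((∫ p, c p ∂π : ℝ) : EReal) - entF c₀ ε ρ π ≤
      ((ε * ∫ p, (Real.exp ((c p - c₀ p) / ε) - 1) ∂ρ : ℝ) : EReal) := by
  have hf : Continuous fun p => (c p - c₀ p) / ε := (c.continuous.sub c₀.continuous).div_const ε
  by_cases h : π ≪ ρ ∧ Integrable (llr π ρ) π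
  · have hexp := (Real.continuous_exp.comp hf).integrable_of_compactSpace ρ
    rw [integral_sub_entF_of_ac c₀ ρ hε.ne' c h, EReal.coe_le_coe_iff,
      integral_exp_sub_one hexp]
    gcongr
    linarith [integral_sub_integral_llr_add_le_integral_exp h.1 h.2
      (hf.integrable_of_compactSpace π) hexp]
  · simp [entF, if_neg h]

lemma exists_integral_sub_entF_eq (hε : ε ≠ 0) (c : C(X × X, ℝ)) :
    ∃ π : Measure (X × X), IsFiniteMeasure π ∧
      ((∫ p, c p ∂π : ℝ) : EReal) - entF c₀ ε ρ π =
        ((ε * ∫ p, (Real.exp ((c p - c₀ p) / ε) - 1) ∂ρ : ℝ) : EReal) := by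
  set f : X × X → ℝ := fun p => (c p - c₀ p) / ε
  have hf : Continuous f := (c.continuous.sub c₀.continuous).div_const ε
  have hexp := (Real.continuous_exp.comp hf).integrable_of_compactSpace ρ
  set π := ρ.withDensity fun p => ENNReal.ofReal (Real.exp (f p))
  have : IsFiniteMeasure π := isFiniteMeasure_withDensity_ofReal hexp.hasFiniteIntegral
  have hπρ : π ≪ ρ := withDensity_absolutelyContinuous ρ _
  have hllr : llr π ρ =ᵐ[π] f := hπρ.ae_le (llr_withDensity_exp_ae_eq hf.measurable)
  refine ⟨π, this, ?_⟩
  rw [integral_sub_entF_of_ac c₀ ρ hε c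
      ⟨hπρ, (hf.integrable_of_compactSpace π).congr hllr.symm⟩,
    integral_congr_ae hllr, toReal_withDensity_exp_univ hexp, integral_exp_sub_one hexp]
  congr 1
  ring

theorem entFstar_eq (hε : 0 < ε) (c : C(X × X, ℝ)) :
    entFstar c₀ ε ρ c = ((ε * ∫ p, (Real.exp ((c p - c₀ p) / ε) - 1) ∂ρ : ℝ) : EReal) := by
  obtain ⟨π, hπ, hval⟩ := exists_integral_sub_entF_eq c₀ ρ hε.ne' c
  exact le_antisymm (iSup_le fun ⟨π, _⟩ => integral_sub_entF_le c₀ ρ hε c π)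
    (le_iSup_of_le (⟨π, hπ⟩ : {π : Measure (X × X) // IsFiniteMeasure π}) hval.ge)

end EntropicConjugate

/-- (Entropy-regularized OT is separably `*`-increasing.)
The conjugate of the entropic objective is `F*(c) = ε ∫ (exp((c−c₀)/ε) − 1) d(μ⊗ν)`;
consequently `φ⊕ψ ≤ c` implies `F*(φ⊕ψ) ≤ F*(c)`. -/
theorem stmt12 {X : Type*} [MetricSpace X] [CompactSpace X] [MeasurableSpace X] [BorelSpace X]
    (μ ν : Measure X) [IsProbabilityMeasure μ] [IsProbabilityMeasure ν]
    (c₀ : C(X × X, ℝ)) (ε : ℝ) (hε : 0 < ε) :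
    (∀ c : C(X × X, ℝ),
      entFstar c₀ ε (μ.prod ν) c =
        ((ε * ∫ p, (Real.exp ((c p - c₀ p) / ε) - 1) ∂(μ.prod ν) : ℝ) : EReal)) ∧
    (∀ (φ ψ : C(X, ℝ)) (c : C(X × X, ℝ)), (∀ x y : X, φ x + ψ y ≤ c (x, y)) →
      entFstar c₀ ε (μ.prod ν) (oplus φ ψ) ≤ entFstar c₀ ε (μ.prod ν) c) :=
  ⟨entFstar_eq c₀ (μ.prod ν) hε, fun _ _ _ h => entFstar_mono c₀ (μ.prod ν) fun p => h p.1 p.2⟩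
end

section
/- (Joint adversarial cost as limit of strongly-coupled costs.) Let X be a compact metric space, T ≥ 2, μ₁,…,μ_T Borel probability measures on X, and for each t ∈ {1,…,T−1} let F_t : M(X×X) → ℝ ∪ {+∞} be proper, convex, weak-* lower semicontinuous, finite at some coupling in Π(μ_t,μ_{t+1}). Let D : C(X×X,ℝ) × C(X×X,ℝ) → [0,+∞) be continuous (for the sup norm) with D(c₁,c₂) = 0 if and only if c₁ = c₂, and assume there is a compact set K ⊂ C(X×X,ℝ) such that F_t* ≡ +∞ outside K for every t. For η ≥ 0 set WR_η = sup over (c₁,…,c_{T−1}) of Σ_{t=1}^{T−1} [ OT_{c_t}(μ_t,μ_{t+1}) − F_t*(c_t) ] − η Σ_{t=1}^{T−2} D(c_t,c_{t+1}). Then as η → +∞, WR_η converges to max_{c ∈ C(X×X,ℝ)} Σ_{t=1}^{T−1} [ OT_c(μ_t,μ_{t+1}) − F_t*(c) ]. -/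
open MeasureTheory Filter Topology

/-- Integral of a function against a finite signed measure, via Jordan decomposition. -/
noncomputable def sintegral {Y : Type*} [MeasurableSpace Y] (s : SignedMeasure Y) (f : Y → ℝ) : ℝ :=
  (∫ y, f y ∂s.toJordanDecomposition.posPart) - ∫ y, f y ∂s.toJordanDecomposition.negPart

/-- The weak-* topology on finite signed measures, induced by integration against
continuous functions. -/
noncomputable def weakStar (Y : Type*) [MeasurableSpace Y] [TopologicalSpace Y] :
    TopologicalSpace (SignedMeasure Y) :=
  TopologicalSpace.induced (fun s => (fun c : C(Y, ℝ) => sintegral s c)) Pi.topologicalSpace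

/-- `π` is a coupling of `μ` and `ν`. -/
def IsCoupling {X : Type*} [MeasurableSpace X] (μ ν : Measure X) (π : Measure (X × X)) : Prop :=
  IsProbabilityMeasure π ∧ π.map Prod.fst = μ ∧ π.map Prod.snd = ν

/-- The set of couplings `Π(μ,ν)`, as a subtype. -/
def Couplings {X : Type*} [MeasurableSpace X] (μ ν : Measure X) :=
  {π : Measure (X × X) // IsCoupling μ ν π}

/-- A coupling, seen as a finite signed measure. -/
noncomputable def couplingSM {X : Type*} [MeasurableSpace X] {μ ν : Measure X}
    (π : Couplings μ ν) : SignedMeasure (X × X) :=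
  haveI := π.2.1
  π.1.toSignedMeasure

/-- The optimal transport cost `OT_c(μ,ν)` for a continuous ground cost `c`. -/
noncomputable def OTcost {X : Type*} [MeasurableSpace X] [TopologicalSpace X]
    (c : C(X × X, ℝ)) (μ ν : Measure X) : ℝ :=
  ⨅ π : Couplings μ ν, ∫ p, c p ∂π.1

/-- Legendre–Fenchel conjugate of `F : M(X×X) → ℝ ∪ {+∞}`, evaluated at continuous costs. -/
noncomputable def Fstar {X : Type*} [MeasurableSpace X] [TopologicalSpace X]
    (F : SignedMeasure (X × X) → EReal) (c : C(X × X, ℝ)) : EReal :=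
  ⨆ s : SignedMeasure (X × X), ((sintegral s c : ℝ) : EReal) - F s

/-- The coupled time-varying adversarial value `WR_η`, where the sequence of adversarial
costs `c 0, …, c (T'−1)` pays a penalty `η Σ_t D(c_t, c_{t+1})` (with the convention that
the last term vanishes). -/
noncomputable def WR {X : Type*} [MetricSpace X] [CompactSpace X] [MeasurableSpace X]
    [BorelSpace X] (T' : ℕ) (μ : Fin (T' + 1) → Measure X)
    (F : Fin T' → SignedMeasure (X × X) → EReal)
    (D : C(X × X, ℝ) × C(X × X, ℝ) → ℝ) (η : ℝ) : EReal :=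
  ⨆ c : Fin T' → C(X × X, ℝ),
    (∑ t : Fin T',
        (((OTcost (c t) (μ t.castSucc) (μ t.succ) : ℝ) : EReal) - Fstar (F t) (c t)))
      - ((η * ∑ t : Fin T',
          (if h : (t : ℕ) + 1 < T' then D (c t, c ⟨(t : ℕ) + 1, h⟩) else 0) : ℝ) : EReal)

/-!
Write `G(c₁,…,c_{T'}) = Σ_t [OT_{c_t}(μ_t,μ_{t+1}) − F_t*(c_t)]`. Each summand is upper
semicontinuous in `c_t` (`OT_c` is 1-Lipschitz in `c`, and `F_t*` is a supremum of continuous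
functions of `c`), never `+∞` because `F_t` is proper, and `−∞` off the compact set `K`.
`WR_η` is the supremum of `G − η P` for the continuous penalty `P ≥ 0` whose zero set is the
diagonal, so it decreases in `η` and dominates the supremum of `G` on the diagonal. Conversely,
if `b < WR_n` for every `n`, the near-maximisers `c⁽ⁿ⁾` lie in `K^{T'}` and satisfy
`n P(c⁽ⁿ⁾) ≤ max G − b`; a cluster point therefore lies on the diagonal, and has `G ≥ b` by upper
semicontinuity. The same compactness gives a maximiser on the diagonal.
-/

section ERealSemicontinuity

variable {α : Type*} [TopologicalSpace α]

theorem upperSemicontinuous_coe_sub {f : α → ℝ} {g : α → EReal}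
    (hf : Continuous f) (hg : LowerSemicontinuous g) :
    UpperSemicontinuous fun x => (f x : EReal) - g x := by
  have hneg : UpperSemicontinuous fun x => -g x := fun x y hy => by
    filter_upwards [hg x (-y) (EReal.neg_lt_comm.mp hy)] with z hz using EReal.neg_lt_comm.mp hz
  exact (continuous_coe_real_ereal.comp hf).upperSemicontinuous.add' hneg
    fun x => EReal.continuousAt_add (.inl (EReal.coe_ne_top _)) (.inl (EReal.coe_ne_bot _))

theorem EReal.coe_sub_ne_top {x : ℝ} {y : EReal} (hy : y ≠ ⊥) : (x : EReal) - y ≠ ⊤ := by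
  rw [sub_eq_add_neg]
  exact EReal.add_ne_top (EReal.coe_ne_top x) (EReal.neg_eq_top_iff.not.mpr hy)

theorem EReal.sum_ne_top {ι : Type*} {s : Finset ι} {f : ι → EReal} (hf : ∀ i ∈ s, f i ≠ ⊤) :
    ∑ i ∈ s, f i ≠ ⊤ :=
  Finset.sum_induction f (· ≠ ⊤) (fun _ _ => EReal.add_ne_top) EReal.zero_ne_top hf

theorem upperSemicontinuous_ereal_sum {ι : Type*} (s : Finset ι) {f : ι → α → EReal}
    (hf : ∀ i ∈ s, UpperSemicontinuous (f i)) (hf_top : ∀ i ∈ s, ∀ x, f i x ≠ ⊤) :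
    UpperSemicontinuous fun x => ∑ i ∈ s, f i x := by
  have key := Finset.sum_induction f (fun h => UpperSemicontinuous h ∧ ∀ x, h x ≠ ⊤)
    (fun a b ha hb => ⟨ha.1.add' hb.1 fun x =>
        EReal.continuousAt_add (.inl (ha.2 x)) (.inr (hb.2 x)),
      fun x => EReal.add_ne_top (ha.2 x) (hb.2 x)⟩)
    ⟨upperSemicontinuous_const, fun _ => EReal.zero_ne_top⟩ fun i hi => ⟨hf i hi, hf_top i hi⟩
  simpa only [Finset.sum_fn] using key.1

end ERealSemicontinuity

section Penalty

variable {Z : Type*} {G : Z → EReal} {P : Z → ℝ}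

noncomputable def penalizedSup (G : Z → EReal) (P : Z → ℝ) (η : ℝ) : EReal :=
  ⨆ z, G z - ((η * P z : ℝ) : EReal)

theorem biSup_le_penalizedSup (η : ℝ) : ⨆ z ∈ P ⁻¹' {0}, G z ≤ penalizedSup G P η :=
  iSup₂_le fun z (hz : P z = 0) => le_iSup_of_le z (by simp [hz])

theorem antitone_penalizedSup (hP0 : ∀ z, 0 ≤ P z) : Antitone (penalizedSup G P) :=
  fun _ _ h => iSup_mono fun z =>
    EReal.sub_le_sub le_rfl (EReal.coe_le_coe_iff.mpr (mul_le_mul_of_nonneg_right h (hP0 z)))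

variable [TopologicalSpace Z] {L : Set Z}

theorem UpperSemicontinuous.exists_isMaxOn_of_eq_bot_off (hG : UpperSemicontinuous G)
    (hL : IsCompact L) (hGL : ∀ z ∉ L, G z = ⊥) {C : Set Z} (hC : IsClosed C)
    (hCne : C.Nonempty) : ∃ z ∈ C, IsMaxOn G C z := by
  rcases (C ∩ L).eq_empty_or_nonempty with hCL | hCL
  · obtain ⟨z, hz⟩ := hCne
    refine ⟨z, hz, fun y hy => ?_⟩
    have hyL : y ∉ L := fun hyL => hCL.subset ⟨hy, hyL⟩
    simp [hGL y hyL]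
  · obtain ⟨z, hz, hmax⟩ := (hG.upperSemicontinuousOn _).exists_isMaxOn hCL (hL.inter_left hC)
    refine ⟨z, hz.1, fun y hy => ?_⟩
    by_cases hyL : y ∈ L
    · exact hmax ⟨hy, hyL⟩
    · simp [hGL y hyL]

theorem MapClusterPt.apply_eq_zero_of_natCast_mul_le {z : ℕ → Z} {z₀ : Z}
    (hz₀ : MapClusterPt z₀ atTop z) (hP : Continuous P) (hP0 : ∀ z, 0 ≤ P z) {M : ℝ}
    (hM : ∀ n : ℕ, n * P (z n) ≤ M) : P z₀ = 0 := by
  by_contra hne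
  have hpos : 0 < P z₀ := (hP0 z₀).lt_of_ne' hne
  obtain ⟨N, hN⟩ := exists_nat_gt (M / (P z₀ / 2))
  obtain ⟨n, hnP, hnN⟩ := ((hz₀.frequently ((hP.tendsto z₀).eventually_const_lt
    (half_lt_self hpos))).and_eventually (eventually_ge_atTop N)).exists
  have : M < n * P (z n) := calc
    M < N * (P z₀ / 2) := (div_lt_iff₀ (by positivity)).mp hN
    _ ≤ n * P (z n) := mul_le_mul (by exact_mod_cast hnN) hnP.le (by positivity) n.cast_nonneg
  linarith [hM n]

theorem le_biSup_of_forall_lt_penalizedSup (hG : UpperSemicontinuous G) (hG_top : ∀ z, G z ≠ ⊤)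
    (hL : IsCompact L) (hGL : ∀ z ∉ L, G z = ⊥) (hP : Continuous P) (hP0 : ∀ z, 0 ≤ P z)
    {b : ℝ} (hb : ∀ n : ℕ, (b : EReal) < penalizedSup G P n) :
    (b : EReal) ≤ ⨆ z ∈ P ⁻¹' {0}, G z := by
  choose z hz using fun n => lt_iSup_iff.mp (hb n)
  have hbG : ∀ n, (b : EReal) < G (z n) := fun n => (hz n).trans_le
    (EReal.sub_le_of_le_add (le_add_of_nonneg_right
      (EReal.coe_nonneg.mpr (mul_nonneg n.cast_nonneg (hP0 _)))))
  obtain ⟨zmax, -, hzmax⟩ :=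
    hG.exists_isMaxOn_of_eq_bot_off hL hGL isClosed_univ ⟨z 0, Set.mem_univ _⟩
  have hzmax_coe : G zmax = ((G zmax).toReal : EReal) :=
    (EReal.coe_toReal (hG_top zmax) (ne_bot_of_gt ((hbG 0).trans_le (hzmax (Set.mem_univ _))))).symm
  have hpen : ∀ n : ℕ, n * P (z n) < (G zmax).toReal - b := fun n => by
    have h := (hz n).trans_le (EReal.sub_le_sub (hzmax (Set.mem_univ (z n))) le_rfl)
    rw [hzmax_coe, ← EReal.coe_sub, EReal.coe_lt_coe_iff] at h
    linarith
  obtain ⟨z₀, -, hz₀⟩ := hL.exists_mapClusterPt_of_frequently (l := atTop) (f := z)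
    (Frequently.of_forall fun n => by_contra fun hn => by simpa [hGL _ hn] using hbG n)
  have hPz₀ : P z₀ = 0 := hz₀.apply_eq_zero_of_natCast_mul_le hP hP0 fun n => (hpen n).le
  have hGz₀ : (b : EReal) ≤ G z₀ := by
    by_contra! hlt
    obtain ⟨n, hn⟩ := (hz₀.frequently (hG z₀ b hlt)).exists
    exact (hbG n).not_gt hn
  exact hGz₀.trans (le_iSup₂_of_le z₀ hPz₀ le_rfl)

theorem tendsto_penalizedSup (hG : UpperSemicontinuous G) (hG_top : ∀ z, G z ≠ ⊤)
    (hL : IsCompact L) (hGL : ∀ z ∉ L, G z = ⊥) (hP : Continuous P) (hP0 : ∀ z, 0 ≤ P z) :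
    Tendsto (penalizedSup G P) atTop (𝓝 (⨆ z ∈ P ⁻¹' {0}, G z)) := by
  have hinf : ⨅ η, penalizedSup G P η = ⨆ z ∈ P ⁻¹' {0}, G z := by
    refine le_antisymm (EReal.ge_of_forall_gt_iff_ge.mp fun b hb => ?_)
      (le_iInf biSup_le_penalizedSup)
    exact le_biSup_of_forall_lt_penalizedSup hG hG_top hL hGL hP hP0
      fun n => hb.trans_le (iInf_le _ _)
  exact hinf ▸ tendsto_atTop_iInf (antitone_penalizedSup hP0)

end Penalty

section ChainPenalty

variable {Y : Type*} {T' : ℕ} {D : Y × Y → ℝ}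

def chainPenalty (D : Y × Y → ℝ) (c : Fin T' → Y) : ℝ :=
  ∑ t : Fin T', if h : (t : ℕ) + 1 < T' then D (c t, c ⟨(t : ℕ) + 1, h⟩) else 0

theorem chainPenalty_nonneg (hD : ∀ p, 0 ≤ D p) (c : Fin T' → Y) : 0 ≤ chainPenalty D c :=
  Finset.sum_nonneg fun t _ => by split_ifs; exacts [hD _, le_rfl]

theorem continuous_chainPenalty [TopologicalSpace Y] (hD : Continuous D) :
    Continuous (chainPenalty (T' := T') D) :=
  continuous_finsetSum _ fun t _ => by
    split_ifs
    exacts [hD.comp ((continuous_apply _).prodMk (continuous_apply _)), continuous_const]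

theorem chainPenalty_eq_zero_iff [Nonempty Y] (hD : ∀ p, 0 ≤ D p)
    (hD_eq : ∀ p : Y × Y, D p = 0 ↔ p.1 = p.2) {c : Fin T' → Y} :
    chainPenalty D c = 0 ↔ ∃ y, c = fun _ => y := by
  constructor
  · intro h
    have hstep : ∀ (t : Fin T') (ht : (t : ℕ) + 1 < T'), c t = c ⟨(t : ℕ) + 1, ht⟩ := by
      intro t ht
      have := (Finset.sum_eq_zero_iff_of_nonneg fun u _ => ?_).mp h t (Finset.mem_univ t)
      · simpa [ht, hD_eq] using this
      · split_ifs; exacts [hD _, le_rfl]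
    cases T' with
    | zero => exact ⟨Classical.arbitrary Y, funext fun t => t.elim0⟩
    | succ k =>
      refine ⟨c 0, funext fun t => ?_⟩
      induction t using Fin.induction with
      | zero => rfl
      | succ i ih => exact (hstep i.castSucc (by simp)).symm.trans ih
  · rintro ⟨y, rfl⟩
    exact Finset.sum_eq_zero fun t _ => by split_ifs; exacts [(hD_eq _).mpr rfl, rfl]

end ChainPenalty

section Integrals

variable {Y : Type*} [TopologicalSpace Y] [CompactSpace Y] [MeasurableSpace Y]
  [OpensMeasurableSpace Y]

theorem integral_le_integral_add_mul_norm_sub (ρ : Measure Y) [IsFiniteMeasure ρ]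
    (c c' : C(Y, ℝ)) : ∫ y, c y ∂ρ ≤ ∫ y, c' y ∂ρ + ρ.real Set.univ * ‖c - c'‖ := by
  have hint : ∀ f : C(Y, ℝ), Integrable f ρ := fun f =>
    (BoundedContinuousFunction.mkOfCompact f).integrable ρ
  have h := (BoundedContinuousFunction.mkOfCompact (c - c')).norm_integral_le_mul_norm ρ
  rw [BoundedContinuousFunction.norm_mkOfCompact] at h
  have hsub : ∫ y, (c - c') y ∂ρ = ∫ y, c y ∂ρ - ∫ y, c' y ∂ρ := integral_sub (hint c) (hint c')
  simp only [BoundedContinuousFunction.mkOfCompact_apply, hsub, Real.norm_eq_abs] at h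
  linarith [le_abs_self (∫ y, c y ∂ρ - ∫ y, c' y ∂ρ)]

theorem continuous_integral_continuousMap (ρ : Measure Y) [IsFiniteMeasure ρ] :
    Continuous fun c : C(Y, ℝ) => ∫ y, c y ∂ρ :=
  (LipschitzWith.of_le_add_mul' _ fun c c' => by
    simpa only [dist_eq_norm] using integral_le_integral_add_mul_norm_sub ρ c c').continuous

theorem continuous_sintegral (s : SignedMeasure Y) :
    Continuous fun c : C(Y, ℝ) => sintegral s c :=
  (continuous_integral_continuousMap _).sub (continuous_integral_continuousMap _)

end Integrals

section OptimalTransport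

variable {X : Type*} [TopologicalSpace X] [MeasurableSpace X]

theorem Fstar_ne_bot {F : SignedMeasure (X × X) → EReal} {s : SignedMeasure (X × X)}
    (hs : F s ≠ ⊤) (c : C(X × X, ℝ)) : Fstar F c ≠ ⊥ :=
  ne_bot_of_le_ne_bot (by simp [sub_eq_add_neg, EReal.add_eq_bot_iff, hs])
    (le_iSup (fun s => ((sintegral s c : ℝ) : EReal) - F s) s)

variable [CompactSpace X] [OpensMeasurableSpace (X × X)]

theorem OTcost_le_add_norm_sub (c c' : C(X × X, ℝ)) (μ ν : Measure X) :
    OTcost c μ ν ≤ OTcost c' μ ν + ‖c - c'‖ := by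
  rcases isEmpty_or_nonempty (Couplings μ ν) with h | h
  · simp [OTcost]
  · have hint : ∀ (π : Couplings μ ν) (f f' : C(X × X, ℝ)),
        ∫ p, f p ∂π.1 ≤ ∫ p, f' p ∂π.1 + ‖f - f'‖ := fun π f f' => by
      have := π.2.1
      simpa using integral_le_integral_add_mul_norm_sub π.1 f f'
    have hbdd : BddBelow (Set.range fun π : Couplings μ ν => ∫ p, c p ∂π.1) :=
      ⟨-‖c‖, Set.forall_mem_range.mpr fun π => by
        have := hint π 0 c
        simp only [ContinuousMap.zero_apply, integral_zero, zero_sub, norm_neg] at this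
        linarith⟩
    rw [← sub_le_iff_le_add]
    refine le_ciInf fun π => ?_
    have hOT : OTcost c μ ν ≤ ∫ p, c p ∂π.1 := ciInf_le hbdd π
    linarith [hint π c c']

theorem continuous_OTcost (μ ν : Measure X) : Continuous fun c : C(X × X, ℝ) => OTcost c μ ν :=
  (LipschitzWith.of_le_add fun c c' => by
    simpa only [dist_eq_norm] using OTcost_le_add_norm_sub c c' μ ν).continuous

theorem lowerSemicontinuous_Fstar (F : SignedMeasure (X × X) → EReal) :
    LowerSemicontinuous (Fstar F) :=
  lowerSemicontinuous_iSup fun s => EReal.lowerSemicontinuous_add.comp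
    ((continuous_coe_real_ereal.comp (continuous_sintegral s)).prodMk continuous_const)

end OptimalTransport

section ChainedSum

variable {Y : Type*} [TopologicalSpace Y] {T' : ℕ} {g : Fin T' → Y → EReal} {K : Set Y}
  {D : Y × Y → ℝ}

theorem tendsto_penalizedSup_chainPenalty [Nonempty Y] (hg : ∀ t, UpperSemicontinuous (g t))
    (hg_top : ∀ t y, g t y ≠ ⊤) (hK : IsCompact K) (hgK : ∀ t, ∀ y ∉ K, g t y = ⊥)
    (hD : Continuous D) (hD0 : ∀ p, 0 ≤ D p) (hD_eq : ∀ p : Y × Y, D p = 0 ↔ p.1 = p.2) :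
    Tendsto (penalizedSup (fun c : Fin T' → Y => ∑ t, g t (c t)) (chainPenalty D)) atTop
        (𝓝 (⨆ y, ∑ t, g t y)) ∧
      ∃ y₀, ∑ t, g t y₀ = ⨆ y, ∑ t, g t y := by
  set G : (Fin T' → Y) → EReal := fun c => ∑ t, g t (c t)
  have hG : UpperSemicontinuous G := upperSemicontinuous_ereal_sum _
    (fun t _ => (hg t).comp (continuous_apply t)) fun t _ _ => hg_top t _
  have hL : IsCompact (Set.univ.pi fun _ : Fin T' => K) := isCompact_univ_pi fun _ => hK
  have hGL : ∀ c ∉ Set.univ.pi fun _ : Fin T' => K, G c = ⊥ := fun c hc => by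
    obtain ⟨t, ht⟩ := not_forall.mp (Set.mem_univ_pi.not.mp hc)
    simp only [G, ← Finset.add_sum_erase _ _ (Finset.mem_univ t), hgK t _ ht, EReal.bot_add]
  have hdiag : chainPenalty D ⁻¹' {0} = Set.range fun (y : Y) (_ : Fin T') => y :=
    Set.ext fun c => (chainPenalty_eq_zero_iff hD0 hD_eq).trans (by simp [eq_comm])
  have hlim := tendsto_penalizedSup hG (fun c => EReal.sum_ne_top fun t _ => hg_top t _) hL hGL
    (continuous_chainPenalty hD) (chainPenalty_nonneg hD0)
  obtain ⟨c, hc, hmax⟩ := hG.exists_isMaxOn_of_eq_bot_off hL hGL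
    (isClosed_singleton.preimage (continuous_chainPenalty hD))
    ⟨fun _ => Classical.arbitrary Y, (chainPenalty_eq_zero_iff hD0 hD_eq).mpr ⟨_, rfl⟩⟩
  rw [hdiag] at hlim hc hmax
  obtain ⟨y₀, rfl⟩ := hc
  rw [iSup_range] at hlim
  exact ⟨hlim, y₀, le_antisymm (le_iSup (fun y => G fun _ => y) y₀)
    (iSup_le fun y => hmax ⟨y, rfl⟩)⟩

end ChainedSum

theorem stmt17_general {X : Type*} [MetricSpace X] [CompactSpace X] [MeasurableSpace X] [BorelSpace X]
    (T' : ℕ)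
    (μ : Fin (T' + 1) → Measure X)
    (F : Fin T' → SignedMeasure (X × X) → EReal)
    (hproper : ∀ t, ∃ s, F t s ≠ ⊤)
    (D : C(X × X, ℝ) × C(X × X, ℝ) → ℝ)
    (hDcont : Continuous D)
    (hDpos : ∀ p, 0 ≤ D p)
    (hDdiv : ∀ p : C(X × X, ℝ) × C(X × X, ℝ), D p = 0 ↔ p.1 = p.2)
    (K : Set C(X × X, ℝ)) (hK : IsCompact K)
    (hKtop : ∀ t, ∀ c ∉ K, Fstar (F t) c = ⊤) :
    Tendsto (fun η : ℝ => WR T' μ F D η) atTop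
      (𝓝 (⨆ c : C(X × X, ℝ), ∑ t : Fin T',
        (((OTcost c (μ t.castSucc) (μ t.succ) : ℝ) : EReal) - Fstar (F t) c))) ∧
    ∃ cs : C(X × X, ℝ),
      (∑ t : Fin T', (((OTcost cs (μ t.castSucc) (μ t.succ) : ℝ) : EReal) - Fstar (F t) cs)) =
        ⨆ c : C(X × X, ℝ), ∑ t : Fin T',
          (((OTcost c (μ t.castSucc) (μ t.succ) : ℝ) : EReal) - Fstar (F t) c) := by
  set g : Fin T' → C(X × X, ℝ) → EReal := fun t c =>
    ((OTcost c (μ t.castSucc) (μ t.succ) : ℝ) : EReal) - Fstar (F t) c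
  have hWR : (fun η => WR T' μ F D η) = penalizedSup (fun c => ∑ t, g t (c t)) (chainPenalty D) :=
    rfl
  rw [hWR]
  exact tendsto_penalizedSup_chainPenalty
    (fun t => upperSemicontinuous_coe_sub (continuous_OTcost _ _) (lowerSemicontinuous_Fstar _))
    (fun t c => EReal.coe_sub_ne_top (Fstar_ne_bot (hproper t).choose_spec c))
    hK (fun t c hc => by simp only [g, hKtop t c hc, EReal.sub_top]) hDcont hDpos hDdiv

/-- (Joint adversarial cost as limit of strongly-coupled costs.)
As `η → +∞`, `WR_η` converges to the joint adversarial value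
`max_c Σ_t OT_c(μ_t,μ_{t+1}) − F_t*(c)`, which is attained. -/
theorem stmt17 {X : Type*} [MetricSpace X] [CompactSpace X] [MeasurableSpace X] [BorelSpace X]
    (T' : ℕ) (hT' : 1 ≤ T')
    (μ : Fin (T' + 1) → Measure X) (hμ : ∀ s, IsProbabilityMeasure (μ s))
    (F : Fin T' → SignedMeasure (X × X) → EReal)
    (hbot : ∀ t s, F t s ≠ ⊥)
    (hproper : ∀ t, ∃ s, F t s ≠ ⊤)
    (hconv : ∀ t, ∀ s₁ s₂ : SignedMeasure (X × X), ∀ a b : ℝ, 0 ≤ a → 0 ≤ b → a + b = 1 →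
      F t (a • s₁ + b • s₂) ≤ (a : EReal) * F t s₁ + (b : EReal) * F t s₂)
    (hlsc : ∀ t, @LowerSemicontinuous (SignedMeasure (X × X)) EReal (weakStar (X × X)) _ (F t))
    (hfin : ∀ t, ∃ π₀ : Couplings (μ t.castSucc) (μ t.succ), F t (couplingSM π₀) < ⊤)
    (D : C(X × X, ℝ) × C(X × X, ℝ) → ℝ)
    (hDcont : Continuous D)
    (hDpos : ∀ p, 0 ≤ D p)
    (hDdiv : ∀ p : C(X × X, ℝ) × C(X × X, ℝ), D p = 0 ↔ p.1 = p.2)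
    (K : Set C(X × X, ℝ)) (hK : IsCompact K)
    (hKtop : ∀ t, ∀ c ∉ K, Fstar (F t) c = ⊤) :
    Tendsto (fun η : ℝ => WR T' μ F D η) atTop
      (𝓝 (⨆ c : C(X × X, ℝ), ∑ t : Fin T',
        (((OTcost c (μ t.castSucc) (μ t.succ) : ℝ) : EReal) - Fstar (F t) c))) ∧
    ∃ cs : C(X × X, ℝ),
      (∑ t : Fin T', (((OTcost cs (μ t.castSucc) (μ t.succ) : ℝ) : EReal) - Fstar (F t) cs)) =
        ⨆ c : C(X × X, ℝ), ∑ t : Fin T',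
          (((OTcost c (μ t.castSucc) (μ t.succ) : ℝ) : EReal) - Fstar (F t) c) :=
  stmt17_general T' μ F hproper D hDcont hDpos hDdiv K hK hKtop
end
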